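/- arXiv:1811.00594 — 2 statements merged into one kernel-verified Lean document; each statement's English description precedes it below -/
import Mathlib

section
/- Let θ : A → A^λ be a primitive substitution of constant length λ ≥ 2, ~θ its synchronizing part, and Θ = θ ∨ ~θ the substitution on overline{𝒳} = {(a, M) : M ∈ 𝒳(θ), a ∈ M} given by Θ(a,M)_j = (θ(a)_j, ~θ(M)_j). Then the column numbers agree: c(Θ) = c(θ). -/
open Filter Topology

/-- `substIter θ l k a j` is the `j`-th letter of `θ^k(a)`, where `θ : A → A^l` is a
substitution of constant length `l` (the letters of `θ(a)` being `θ a 0, …, θ a (l-1)`).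
It is meaningful for `j < l ^ k` and satisfies
`θ^{k+1}(a)_{j'·l + r} = θ(θ^k(a)_{j'})_r`. -/
def substIter {A : Type*} (θ : A → ℕ → A) (l : ℕ) : ℕ → A → ℕ → A
  | 0, a, _ => a
  | k + 1, a, j => θ (substIter θ l k a (j / l)) (j % l)

/-- A substitution of constant length `l` is primitive if some iterate of every letter
contains every letter. -/
def SubstPrimitive {A : Type*} (θ : A → ℕ → A) (l : ℕ) : Prop :=
  ∃ k, 1 ≤ k ∧ ∀ a b : A, ∃ j, j < l ^ k ∧ substIter θ l k a j = b

/-- Primitivity of a substitution restricted to a sub-alphabet `S`. -/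
def SubstPrimitiveOn {A : Type*} (θ : A → ℕ → A) (l : ℕ) (S : Set A) : Prop :=
  ∃ k, 1 ≤ k ∧ ∀ a ∈ S, ∀ b ∈ S, ∃ j, j < l ^ k ∧ substIter θ l k a j = b

/-- The column number of a substitution of constant length `l`, restricted to the
sub-alphabet `S`: the minimal cardinality of a column set `{θ^k(a)_j : a ∈ S}`. -/
noncomputable def columnNumberOn {A : Type*} (θ : A → ℕ → A) (l : ℕ) (S : Set A) : ℕ :=
  sInf { n : ℕ | ∃ k, 1 ≤ k ∧ ∃ j, j < l ^ k ∧
    ((fun a => substIter θ l k a j) '' S).ncard = n }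

/-- The column number `c(θ)` of a substitution of constant length `l`. -/
noncomputable def columnNumber {A : Type*} (θ : A → ℕ → A) (l : ℕ) : ℕ :=
  columnNumberOn θ l Set.univ

/-- The one-sided fixed point `u` of `θ` obtained by iterating `θ` at a letter `a₀`
with `θ(a₀)_0 = a₀`: `u n = θ^k(a₀)_n` for any `k` with `n < l^k`. -/
def substFixedPoint {A : Type*} (θ : A → ℕ → A) (l : ℕ) (a₀ : A) : ℕ → A :=
  fun n => substIter θ l (n + 1) a₀ n

/-- The height `h(θ)`: the largest `m ≥ 1` coprime to `l` dividing
`gcd {r ≥ 1 : u[r] = u[0]}`, i.e. dividing every return time of `u[0]`. -/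
noncomputable def substHeight {A : Type*} (θ : A → ℕ → A) (l : ℕ) (a₀ : A) : ℕ :=
  sSup { m : ℕ | 1 ≤ m ∧ Nat.Coprime m l ∧
    ∀ r : ℕ, 1 ≤ r → substFixedPoint θ l a₀ r = substFixedPoint θ l a₀ 0 → m ∣ r }

/-- The subshift `X_θ ⊆ A^ℤ`: all `x` each of whose finite blocks occurs in some
`θ^k(a)`. -/
def subshift {A : Type*} (θ : A → ℕ → A) (l : ℕ) : Set (ℤ → A) :=
  { x | ∀ (i : ℤ) (n : ℕ), ∃ k, 1 ≤ k ∧ ∃ a : A, ∃ j : ℕ, j + n ≤ l ^ k ∧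
      ∀ m : ℕ, m < n → x (i + (m : ℤ)) = substIter θ l k a (j + m) }

/-- The subshift `X_x ⊆ A^ℤ` generated by a one-sided sequence `x ∈ A^ℕ`: all `z`
each of whose finite blocks occurs in `x`. -/
def subshiftOf {A : Type*} (x : ℕ → A) : Set (ℤ → A) :=
  { z | ∀ (i : ℤ) (n : ℕ), ∃ j : ℕ, ∀ m : ℕ, m < n → z (i + (m : ℤ)) = x (j + m) }

/-- The left shift on `A^ℤ`. -/
def shift {A : Type*} (x : ℤ → A) : ℤ → A := fun n => x (n + 1)

/-- A bounded arithmetic function. -/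
def BoundedSeq (u : ℕ → ℂ) : Prop := ∃ C : ℝ, ∀ n, ‖u n‖ ≤ C

/-- A multiplicative arithmetic function: `u(mn) = u(m)u(n)` for coprime `m, n`. -/
def MultiplicativeSeq (u : ℕ → ℂ) : Prop :=
  ∀ m n : ℕ, Nat.Coprime m n → u (m * n) = u m * u n

/-- An aperiodic arithmetic function: zero mean along every arithmetic progression. -/
def AperiodicSeq (u : ℕ → ℂ) : Prop :=
  ∀ a b : ℕ, 1 ≤ a →
    Tendsto (fun N : ℕ => (N : ℂ)⁻¹ * ∑ n ∈ Finset.Icc 1 N, u (a * n + b)) atTop (nhds 0)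

/-- The Weyl pseudo-metric
`d_W(x,y) = limsup_N sup_{ℓ ≥ 1} (1/N)·#{ℓ ≤ n < ℓ+N : x n ≠ y n}`. -/
noncomputable def weylDist {B : Type*} (x y : ℕ → B) : ℝ :=
  limsup (fun N : ℕ =>
    ⨆ ℓ : ℕ, ⨆ _ : 1 ≤ ℓ,
      (({ n : ℕ | ℓ ≤ n ∧ n < ℓ + N ∧ x n ≠ y n }.ncard : ℝ) / N)) atTop

/-- A periodic sequence. -/
def IsPeriodicSeq {B : Type*} (v : ℕ → B) : Prop :=
  ∃ p, 1 ≤ p ∧ ∀ n, v (n + p) = v n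

/-- Weyl rational almost periodicity: a `d_W`-limit of periodic sequences. -/
def WRAPSeq {B : Type*} (x : ℕ → B) : Prop :=
  ∀ ε : ℝ, 0 < ε → ∃ v : ℕ → B, IsPeriodicSeq v ∧ weylDist x v < ε

/-- The family `𝒳(θ)` of column sets realizing the column number of `θ`. -/
noncomputable def columnSets {A : Type*} (θ : A → ℕ → A) (l : ℕ) : Set (Set A) :=
  { M | (∃ k, 1 ≤ k ∧ ∃ j, j < l ^ k ∧ M = (fun a => substIter θ l k a j) '' Set.univ) ∧
        M.ncard = columnNumber θ l }

/-- The synchronizing part `~θ` of `θ`, as a substitution on subsets of the alphabet: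
`~θ(M)_j = {θ(a)_j : a ∈ M}`. -/
def synchPart {A : Type*} (θ : A → ℕ → A) : Set A → ℕ → Set A :=
  fun M j => (fun a => θ a j) '' M

/-- The joining `θ ∨ ζ` of two substitutions of the same constant length. -/
def joinSub {A B : Type*} (θ : A → ℕ → A) (ζ : B → ℕ → B) : A × B → ℕ → A × B :=
  fun p j => (θ p.1 j, ζ p.2 j)

/-- The pure base `θ^{(h)}` of `θ`: a substitution of length `l` on blocks of length `h`,
`θ^{(h)}(w)_j = θ(w)[jh, (j+1)h−1]`, where `θ(w)` is the concatenation
`θ(w_0)…θ(w_{h-1})`. -/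
def pureBase {A : Type*} (θ : A → ℕ → A) (l h : ℕ) : (Fin h → A) → ℕ → (Fin h → A) :=
  fun w j i => θ (w ⟨(j * h + i.val) / l % h, Nat.mod_lt _ i.pos⟩) ((j * h + i.val) % l)

/-- Iterated cocycle `σ^{(k)}`, with `σ^{(1)} = σ` and
`σ^{(k+1)}(M, j₁·l + j₂) = σ^{(k)}(M, j₁) ∘ σ(~θ^k(M)_{j₁}, j₂)`. -/
def sigmaIter {X : Type*} {c : ℕ} (tilde : X → ℕ → X)
    (σ : X → ℕ → Equiv.Perm (Fin c)) (l : ℕ) : ℕ → X → ℕ → Equiv.Perm (Fin c)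
  | 0, _, _ => 1
  | k + 1, M, j =>
      sigmaIter tilde σ l k M (j / l) * σ (substIter tilde l k M (j / l)) (j % l)

/-- The group extension substitution `Θ̂(g, M)_j = (g ∘ σ(M,j), ~θ(M)_j)`. -/
def hatTheta {X : Type*} {c : ℕ} (tilde : X → ℕ → X)
    (σ : X → ℕ → Equiv.Perm (Fin c)) : Equiv.Perm (Fin c) × X → ℕ → Equiv.Perm (Fin c) × X :=
  fun p j => (p.1 * σ p.2 j, tilde p.2 j)

/-- The group `G` generated by the cocycle values `σ(M, j)`, `M ∈ 𝒳`, `j < l`. -/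
def cocycleGroup {X : Type*} {c : ℕ} (σ : X → ℕ → Equiv.Perm (Fin c)) (l : ℕ) :
    Subgroup (Equiv.Perm (Fin c)) :=
  Subgroup.closure { g | ∃ M : X, ∃ j, j < l ∧ g = σ M j }

/-!
Let `M₀ = {θ^{k₀}(a)_{j₀} : a ∈ A}` be a column of minimal size `c = c(θ)`. For `M ∈ 𝒳(θ)` every
set `{θ^k(a)_j : a ∈ M}` is itself a column of `θ`, so it has at least `c` elements. Hence
`θ^{k₀}(·)_{j₀}` maps every `M ∈ 𝒳(θ)` onto `M₀`, so the `(k₀, j₀)`-column of `Θ` lies in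
`M₀ × {M₀}` and `c(Θ) ≤ c`. Conversely the first coordinates of any column of `Θ` contain
`{θ^k(a)_j : a ∈ M₀}`, so `c(Θ) ≥ c`.
-/

open Set

section

variable {A : Type*}

def substColumn (θ : A → ℕ → A) (l k j : ℕ) (S : Set A) : Set A :=
  (fun a => substIter θ l k a j) '' S

def joinedAlphabet (θ : A → ℕ → A) (l : ℕ) : Set (A × Set A) :=
  { p | p.2 ∈ columnSets θ l ∧ p.1 ∈ p.2 }

theorem substIter_joinSub {B : Type*} (θ : A → ℕ → A) (ζ : B → ℕ → B) (l k : ℕ) (p : A × B)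
    (j : ℕ) : substIter (joinSub θ ζ) l k p j = (substIter θ l k p.1 j, substIter ζ l k p.2 j) := by
  induction k generalizing j with
  | zero => rfl
  | succ k ih => simp only [substIter, ih]; rfl

theorem substIter_synchPart (θ : A → ℕ → A) (l k : ℕ) (M : Set A) (j : ℕ) :
    substIter (synchPart θ) l k M j = substColumn θ l k j M := by
  induction k generalizing j with
  | zero => simp [substIter, substColumn]
  | succ k ih => simp only [substIter, ih, synchPart, substColumn, image_image]

theorem substIter_add (θ : A → ℕ → A) {l : ℕ} (hl : 0 < l) (k : ℕ) (a : A) (j : ℕ) {k' j' : ℕ}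
    (hj' : j' < l ^ k') :
    substIter θ l (k + k') a (j * l ^ k' + j') = substIter θ l k' (substIter θ l k a j) j' := by
  induction k' generalizing j' with
  | zero =>
    obtain rfl : j' = 0 := by simpa using hj'
    simp [substIter]
  | succ k' ih =>
    have hsplit : j * l ^ (k' + 1) + j' = j' + j * l ^ k' * l := by ring
    have hdiv : (j * l ^ (k' + 1) + j') / l = j * l ^ k' + j' / l := by
      rw [hsplit, Nat.add_mul_div_right _ _ hl, add_comm]
    have hmod : (j * l ^ (k' + 1) + j') % l = j' % l := by
      rw [hsplit, Nat.add_mul_mod_self_right]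
    have hlt : j' / l < l ^ k' := Nat.div_lt_of_lt_mul (by rwa [← pow_succ'])
    rw [← add_assoc, substIter, hdiv, hmod, ih hlt]
    rfl

theorem mul_pow_add_lt_pow_add {l k₁ j₁ k j : ℕ} (hj₁ : j₁ < l ^ k₁) (hj : j < l ^ k) :
    j₁ * l ^ k + j < l ^ (k₁ + k) :=
  calc j₁ * l ^ k + j < (j₁ + 1) * l ^ k := by rw [add_one_mul]; omega
    _ ≤ l ^ k₁ * l ^ k := Nat.mul_le_mul_right _ hj₁
    _ = l ^ (k₁ + k) := (pow_add l k₁ k).symm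

theorem substColumn_substColumn (θ : A → ℕ → A) {l : ℕ} (hl : 0 < l) {k j : ℕ} (hj : j < l ^ k)
    (k₁ j₁ : ℕ) (S : Set A) :
    substColumn θ l k j (substColumn θ l k₁ j₁ S) =
      substColumn θ l (k₁ + k) (j₁ * l ^ k + j) S := by
  simp only [substColumn, image_image, substIter_add θ hl k₁ _ j₁ hj]

theorem columnNumberOn_le_ncard_substColumn (θ : A → ℕ → A) {l k j : ℕ} (S : Set A)
    (hk : 1 ≤ k) (hj : j < l ^ k) : columnNumberOn θ l S ≤ (substColumn θ l k j S).ncard :=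
  Nat.sInf_le ⟨k, hk, j, hj, rfl⟩

theorem exists_ncard_substColumn_eq_columnNumberOn (θ : A → ℕ → A) {l : ℕ} (S : Set A)
    (hl : 0 < l) :
    ∃ k, 1 ≤ k ∧ ∃ j, j < l ^ k ∧ (substColumn θ l k j S).ncard = columnNumberOn θ l S :=
  Nat.sInf_mem (s := {n | ∃ k, 1 ≤ k ∧ ∃ j, j < l ^ k ∧ (substColumn θ l k j S).ncard = n})
    ⟨_, 1, le_rfl, 0, by simpa using hl, rfl⟩

theorem columnNumber_le_ncard_substColumn_of_mem_columnSets {θ : A → ℕ → A} {l k j : ℕ}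
    {M : Set A} (hl : 0 < l) (hM : M ∈ columnSets θ l) (hj : j < l ^ k) :
    columnNumber θ l ≤ (substColumn θ l k j M).ncard := by
  obtain ⟨⟨k₁, hk₁, j₁, hj₁, rfl⟩, -⟩ := hM
  change _ ≤ (substColumn θ l k j (substColumn θ l k₁ j₁ univ)).ncard
  rw [substColumn_substColumn θ hl hj]
  exact columnNumberOn_le_ncard_substColumn θ univ (by omega) (mul_pow_add_lt_pow_add hj₁ hj)

theorem substColumn_eq_of_mem_columnSets [Finite A] {θ : A → ℕ → A} {l k j : ℕ} {M : Set A}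
    (hl : 0 < l) (hM : M ∈ columnSets θ l) (hj : j < l ^ k)
    (hmin : (substColumn θ l k j univ).ncard = columnNumber θ l) :
    substColumn θ l k j M = substColumn θ l k j univ :=
  eq_of_subset_of_ncard_le (image_mono (subset_univ M))
    (hmin ▸ columnNumber_le_ncard_substColumn_of_mem_columnSets hl hM hj)

theorem substColumn_joinSub_synchPart (θ : A → ℕ → A) (l k j : ℕ) (S : Set (A × Set A)) :
    substColumn (joinSub θ (synchPart θ)) l k j S =
      (fun p => (substIter θ l k p.1 j, substColumn θ l k j p.2)) '' S := by
  simp only [substColumn, substIter_joinSub, substIter_synchPart]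

theorem columnNumber_le_ncard_substColumn_joinedAlphabet [Finite A] {θ : A → ℕ → A}
    {l k j : ℕ} (hl : 0 < l) (hj : j < l ^ k) :
    columnNumber θ l ≤
      (substColumn (joinSub θ (synchPart θ)) l k j (joinedAlphabet θ l)).ncard := by
  obtain ⟨k₀, hk₀, j₀, hj₀, hmin⟩ := exists_ncard_substColumn_eq_columnNumberOn θ univ hl
  have hM₀ : substColumn θ l k₀ j₀ univ ∈ columnSets θ l := ⟨⟨k₀, hk₀, j₀, hj₀, rfl⟩, hmin⟩
  have hsub : substColumn θ l k j (substColumn θ l k₀ j₀ univ) ⊆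
      Prod.fst '' substColumn (joinSub θ (synchPart θ)) l k j (joinedAlphabet θ l) := by
    rintro _ ⟨a, ha, rfl⟩
    rw [substColumn_joinSub_synchPart, image_image]
    exact ⟨(a, _), ⟨hM₀, ha⟩, rfl⟩
  calc columnNumber θ l ≤ (substColumn θ l k j (substColumn θ l k₀ j₀ univ)).ncard :=
        columnNumber_le_ncard_substColumn_of_mem_columnSets hl hM₀ hj
    _ ≤ _ := ncard_le_ncard hsub
    _ ≤ _ := ncard_image_le

theorem ncard_substColumn_joinedAlphabet_le [Finite A] {θ : A → ℕ → A} {l k j : ℕ}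
    (hl : 0 < l) (hj : j < l ^ k) (hmin : (substColumn θ l k j univ).ncard = columnNumber θ l) :
    (substColumn (joinSub θ (synchPart θ)) l k j (joinedAlphabet θ l)).ncard ≤
      columnNumber θ l := by
  have hsub : substColumn (joinSub θ (synchPart θ)) l k j (joinedAlphabet θ l) ⊆
      (fun x => (x, substColumn θ l k j univ)) '' substColumn θ l k j univ := by
    rw [substColumn_joinSub_synchPart]
    rintro _ ⟨⟨a, M⟩, ⟨hM, -⟩, rfl⟩
    dsimp only at hM ⊢
    rw [substColumn_eq_of_mem_columnSets hl hM hj hmin]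
    exact mem_image_of_mem _ (mem_image_of_mem _ (mem_univ a))
  calc _ ≤ _ := ncard_le_ncard hsub
    _ ≤ _ := ncard_image_le
    _ = _ := hmin

end

theorem join_with_synchronizing_columnNumber_general
    {A : Type*} [Finite A] (l : ℕ) (hl : 2 ≤ l)
    (θ : A → ℕ → A) :
    columnNumberOn (joinSub θ (synchPart θ)) l
        { p : A × Set A | p.2 ∈ columnSets θ l ∧ p.1 ∈ p.2 } = columnNumber θ l := by
  have hl0 : 0 < l := by omega
  obtain ⟨k₀, hk₀, j₀, hj₀, hmin⟩ := exists_ncard_substColumn_eq_columnNumberOn θ univ hl0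
  refine IsLeast.csInf_eq ⟨⟨k₀, hk₀, j₀, hj₀, le_antisymm ?_ ?_⟩, ?_⟩
  · exact ncard_substColumn_joinedAlphabet_le hl0 hj₀ hmin
  · exact columnNumber_le_ncard_substColumn_joinedAlphabet hl0 hj₀
  · rintro n ⟨k, -, j, hj, rfl⟩
    exact columnNumber_le_ncard_substColumn_joinedAlphabet hl0 hj

/-- The joining `Θ = θ ∨ ~θ` of a primitive substitution `θ` with its
synchronizing part has the same column number as `θ`: `c(Θ) = c(θ)`. -/
theorem join_with_synchronizing_columnNumber
    {A : Type*} [Finite A] (l : ℕ) (hl : 2 ≤ l)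
    (θ : A → ℕ → A) (hθ : SubstPrimitive θ l) :
    columnNumberOn (joinSub θ (synchPart θ)) l
        { p : A × Set A | p.2 ∈ columnSets θ l ∧ p.1 ∈ p.2 } = columnNumber θ l :=
  join_with_synchronizing_columnNumber_general l hl θ
end

section
/- In the group-extension setting below, the group G equals the set {σ^{(k)}(M₀, j) : k ≥ 1, j < λ^k, ~θ^k(M₀)_j = M₀}; in particular this set of cocycle values over return positions to M₀ is closed under composition and forms a group. -/
open Filter Topology

section AuxCocycle

variable {X : Type*} {c : ℕ} (tilde : X → ℕ → X) (σ : X → ℕ → Equiv.Perm (Fin c)) (l : ℕ)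

lemma substIter_add_s17 (hl0 : 0 < l) (k₁ k₂ : ℕ) (M : X) (j₁ : ℕ) :
    ∀ j₂ < l ^ k₂, substIter tilde l (k₁ + k₂) M (j₁ * l ^ k₂ + j₂) =
      substIter tilde l k₂ (substIter tilde l k₁ M j₁) j₂ := by
  induction k₂ with
  | zero =>
    intro j₂ h₂
    have : j₂ = 0 := by simpa using h₂
    subst this
    simp [substIter]
  | succ k ih =>
    intro j₂ h₂
    have e1 : j₁ * l ^ (k + 1) + j₂ = j₂ + (j₁ * l ^ k) * l := by ring
    have hdiv : (j₁ * l ^ (k + 1) + j₂) / l = j₁ * l ^ k + j₂ / l := by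
      rw [e1, Nat.add_mul_div_right _ _ hl0, add_comm]
    have hmod : (j₁ * l ^ (k + 1) + j₂) % l = j₂ % l := by
      rw [e1, Nat.add_mul_mod_self_right]
    have hd2 : j₂ / l < l ^ k := by
      rw [Nat.div_lt_iff_lt_mul hl0, ← pow_succ]; exact h₂
    rw [show k₁ + (k + 1) = (k₁ + k) + 1 from rfl]
    simp only [substIter]
    rw [hdiv, hmod, ih _ hd2]

lemma sigmaIter_add (hl0 : 0 < l) (k₁ k₂ : ℕ) (M : X) (j₁ : ℕ) :
    ∀ j₂ < l ^ k₂, sigmaIter tilde σ l (k₁ + k₂) M (j₁ * l ^ k₂ + j₂) =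
      sigmaIter tilde σ l k₁ M j₁ *
        sigmaIter tilde σ l k₂ (substIter tilde l k₁ M j₁) j₂ := by
  induction k₂ with
  | zero =>
    intro j₂ h₂
    have : j₂ = 0 := by simpa using h₂
    subst this
    simp [sigmaIter]
  | succ k ih =>
    intro j₂ h₂
    have e1 : j₁ * l ^ (k + 1) + j₂ = j₂ + (j₁ * l ^ k) * l := by ring
    have hdiv : (j₁ * l ^ (k + 1) + j₂) / l = j₁ * l ^ k + j₂ / l := by
      rw [e1, Nat.add_mul_div_right _ _ hl0, add_comm]
    have hmod : (j₁ * l ^ (k + 1) + j₂) % l = j₂ % l := by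
      rw [e1, Nat.add_mul_mod_self_right]
    have hd2 : j₂ / l < l ^ k := by
      rw [Nat.div_lt_iff_lt_mul hl0, ← pow_succ]; exact h₂
    rw [show k₁ + (k + 1) = (k₁ + k) + 1 from rfl]
    simp only [sigmaIter]
    rw [hdiv, hmod, ih _ hd2, substIter_add_s17 tilde l hl0 k₁ k M j₁ _ hd2, mul_assoc]

lemma sigmaIter_mem_cocycleGroup (hl0 : 0 < l) (k : ℕ) (M : X) (j : ℕ) :
    sigmaIter tilde σ l k M j ∈ cocycleGroup σ l := by
  induction k generalizing M j with
  | zero => exact one_mem _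
  | succ k ih =>
    exact mul_mem (ih _ _)
      (Subgroup.subset_closure ⟨_, j % l, Nat.mod_lt _ hl0, rfl⟩)

end AuxCocycle

/-- In the group-extension setting, the group `G` equals the set of
cocycle values `σ^{(k)}(M₀, j)` over return positions of `~θ` to `M₀`. -/
theorem cocycleGroup_eq_return_cocycle_values
    {X : Type*} [Finite X] (l c : ℕ) (hl : 2 ≤ l) (hc : 1 ≤ c)
    (tilde : X → ℕ → X) (hprim : SubstPrimitive tilde l)
    (σ : X → ℕ → Equiv.Perm (Fin c)) (M₀ : X)
    (H1 : ∃ k₀, 1 ≤ k₀ ∧ ∃ j₀, j₀ < l ^ k₀ ∧ ∀ M : X,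
      substIter tilde l k₀ M j₀ = M₀ ∧ sigmaIter tilde σ l k₀ M j₀ = 1)
    (H2a : tilde M₀ 0 = M₀) (H2b : σ M₀ 0 = 1) :
    (cocycleGroup σ l : Set (Equiv.Perm (Fin c))) =
      { g | ∃ k, 1 ≤ k ∧ ∃ j, j < l ^ k ∧
        substIter tilde l k M₀ j = M₀ ∧ sigmaIter tilde σ l k M₀ j = g } := by
  obtain ⟨k₀, hk₀, j₀, hj₀, hH1⟩ := H1
  have hl0 : 0 < l := by omega
  set S : Set (Equiv.Perm (Fin c)) :=
    { g | ∃ k, 1 ≤ k ∧ ∃ j, j < l ^ k ∧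
        substIter tilde l k M₀ j = M₀ ∧ sigmaIter tilde σ l k M₀ j = g } with hS
  -- any cocycle value starting at M₀ lies in S (append the synchronizing word from H1)
  have hsub : ∀ k j, j < l ^ k → sigmaIter tilde σ l k M₀ j ∈ S := by
    intro k j hj
    refine ⟨k + k₀, by omega, j * l ^ k₀ + j₀, ?_, ?_, ?_⟩
    · calc j * l ^ k₀ + j₀ < (j + 1) * l ^ k₀ := by
            rw [add_one_mul]; omega
        _ ≤ l ^ k * l ^ k₀ := Nat.mul_le_mul_right _ hj
        _ = l ^ (k + k₀) := (pow_add l k k₀).symm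
    · rw [substIter_add_s17 tilde l hl0 k k₀ M₀ j j₀ hj₀]
      exact (hH1 _).1
    · rw [sigmaIter_add tilde σ l hl0 k k₀ M₀ j j₀ hj₀, (hH1 _).2, mul_one]
  have hone : (1 : Equiv.Perm (Fin c)) ∈ S := by
    refine ⟨1, le_refl 1, 0, by positivity, ?_, ?_⟩
    · show tilde (substIter tilde l 0 M₀ (0 / l)) (0 % l) = M₀
      simpa [substIter] using H2a
    · show sigmaIter tilde σ l 0 M₀ (0 / l) *
        σ (substIter tilde l 0 M₀ (0 / l)) (0 % l) = 1
      simpa [sigmaIter, substIter] using H2b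
  have hmul : ∀ g₁ ∈ S, ∀ g₂ ∈ S, g₁ * g₂ ∈ S := by
    rintro g₁ ⟨k₁, hk₁, j₁, hj₁, hM₁, hs₁⟩ g₂ ⟨k₂, hk₂, j₂, hj₂, hM₂, hs₂⟩
    refine ⟨k₁ + k₂, by omega, j₁ * l ^ k₂ + j₂, ?_, ?_, ?_⟩
    · calc j₁ * l ^ k₂ + j₂ < (j₁ + 1) * l ^ k₂ := by
            rw [add_one_mul]; omega
        _ ≤ l ^ k₁ * l ^ k₂ := Nat.mul_le_mul_right _ hj₁
        _ = l ^ (k₁ + k₂) := (pow_add l k₁ k₂).symm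
    · rw [substIter_add_s17 tilde l hl0 k₁ k₂ M₀ j₁ j₂ hj₂, hM₁, hM₂]
    · rw [sigmaIter_add tilde σ l hl0 k₁ k₂ M₀ j₁ j₂ hj₂, hM₁, hs₁, hs₂]
  have hpow : ∀ (g : Equiv.Perm (Fin c)), g ∈ S → ∀ n, g ^ n ∈ S := by
    intro g hg n
    induction n with
    | zero => simpa using hone
    | succ n ih => rw [pow_succ]; exact hmul _ ih _ hg
  have hinv : ∀ (g : Equiv.Perm (Fin c)), g ∈ S → g⁻¹ ∈ S := by
    intro g hg
    have ho : 0 < orderOf g := orderOf_pos g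
    have : g ^ (orderOf g - 1) = g⁻¹ := by
      apply eq_inv_of_mul_eq_one_left
      rw [← pow_succ, Nat.sub_add_cancel ho, pow_orderOf_eq_one]
    rw [← this]
    exact hpow g hg _
  apply Set.eq_of_subset_of_subset
  · -- G ⊆ S
    intro g hg
    refine Subgroup.closure_induction ?_ hone (fun x y _ _ hx hy => hmul x hx y hy)
      (fun x _ hx => hinv x hx) hg
    rintro x ⟨M, j, hj, rfl⟩
    obtain ⟨kp, hkp, hpr⟩ := hprim
    obtain ⟨p, hp, hpM⟩ := hpr M₀ M
    set h := sigmaIter tilde σ l kp M₀ p with hh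
    have hmem1 : h ∈ S := hsub kp p hp
    have hbound : l * p + j < l ^ (kp + 1) := by
      calc l * p + j < l * (p + 1) := by rw [Nat.mul_succ]; omega
        _ ≤ l * l ^ kp := by exact Nat.mul_le_mul_left _ hp
        _ = l ^ (kp + 1) := by rw [pow_succ, mul_comm]
    have hdiv : (l * p + j) / l = p := by
      rw [Nat.mul_add_div hl0, Nat.div_eq_of_lt hj, add_zero]
    have hmod : (l * p + j) % l = j := by
      rw [Nat.mul_add_mod, Nat.mod_eq_of_lt hj]
    have hval : sigmaIter tilde σ l (kp + 1) M₀ (l * p + j) = h * σ M j := by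
      show sigmaIter tilde σ l kp M₀ ((l * p + j) / l) *
        σ (substIter tilde l kp M₀ ((l * p + j) / l)) ((l * p + j) % l) = h * σ M j
      rw [hdiv, hmod, hpM]
    have hmem2 : h * σ M j ∈ S := by
      rw [← hval]; exact hsub (kp + 1) (l * p + j) hbound
    have : σ M j = h⁻¹ * (h * σ M j) := by group
    rw [this]
    exact hmul _ (hinv h hmem1) _ hmem2
  · -- S ⊆ G
    rintro g ⟨k, _, j, _, _, hs⟩
    rw [← hs]
    exact sigmaIter_mem_cocycleGroup tilde σ l hl0 k M₀ j
end
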